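/- (B_n sequence.) Let n ≥ 4 be an integer, d = n+1, and a = √(8/n). On ℝ^{d+1} = ℝ^{n+1} × ℝ (one dilaton φ) consider the n+2 wall forms, indexed by −1, 0, 1, …, n: w_{−1} = e_{n+1} − e_n, w₀ = e_n − e_{n−1}, w₁ = e₁ + … + e_{n−2} − (a√2/2)φ, w_j = e_{n−j+1} − e_{n−j} for 2 ≤ j ≤ n−1, and w_n = e₁ + (a√2/4)φ. Then (w_i|w_i) = 2 for i = −1, 0, 1, …, n−1 and (w_n|w_n) = 1, and the Cartan matrix A_{ij} = 2(w_i|w_j)/(w_i|w_i) has entries: A_{ii} = 2; A_{−1,0} = A_{0,−1} = −1; A_{0,2} = A_{2,0} = −1; A_{1,2} = A_{2,1} = −1; A_{j,j+1} = A_{j+1,j} = −1 for 2 ≤ j ≤ n−2; A_{n−1,n} = −1 and A_{n,n−1} = −2; all other entries 0. This is the generalized Cartan matrix of the overextension B_n^∧∧. -/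

import Mathlib

/-!
The gravitational walls `e_{k+1} − e_k` have coordinate sum zero, so the trace term of the wall
scalar product drops out against them and they form the `A`-type chain of simple roots. The two
remaining walls have the shape `e₁ + ⋯ + e_r + cφ` (with `r = n − 2` and `r = 1`), whose products
are `min r s − r s / n + c c'`; since `a² = 8 / n`, the dilaton terms `4/n`, `−2/n`, `1/n` turn
these into `2`, `0`, `1`. Dividing the resulting Gram matrix by its diagonal gives the Cartan
matrix of `Bₙ^∧∧`.
-/

/-- The wall scalar product on `ℝ^{n+1} × ℝ` (`d = n+1` scale factors, one dilaton):
`(w|w') = Σᵢ wᵢw'ᵢ − (1/n)(Σᵢ wᵢ)(Σᵢ w'ᵢ) + w̃ w̃'`. -/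
noncomputable def wallIPB (n : ℕ) (w w' : (Fin (n + 1) → ℝ) × ℝ) : ℝ :=
  (∑ i, w.1 i * w'.1 i) - (1 / (n : ℝ)) * (∑ i, w.1 i) * (∑ i, w'.1 i) + w.2 * w'.2

theorem wallIPB_comm {n : ℕ} (w w' : (Fin (n + 1) → ℝ) × ℝ) :
    wallIPB n w w' = wallIPB n w' w := by
  simp only [wallIPB, mul_comm]
  ring

/-- The wall `e_{p+1} − e_{q+1}` (coordinates are `0`-based). -/
def rootWall (n p q : ℕ) : (Fin (n + 1) → ℝ) × ℝ :=
  (fun l => (if l.val = p then 1 else 0) - (if l.val = q then 1 else 0), 0)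

/-- The wall `e₁ + ⋯ + e_r + c φ`. -/
def prefixWall (n r : ℕ) (c : ℝ) : (Fin (n + 1) → ℝ) × ℝ :=
  (fun l => if l.val < r then 1 else 0, c)

theorem Fin.sum_ite_val_eq_mul {R : Type*} [NonAssocSemiring R] {n p : ℕ} (hp : p < n)
    (f : Fin n → R) : ∑ l : Fin n, (if l.val = p then 1 else 0) * f l = f ⟨p, hp⟩ := by
  simp [← Fin.ext_iff (b := ⟨p, hp⟩)]

theorem Fin.sum_ite_val_lt {R : Type*} [AddCommMonoidWithOne R] {n r : ℕ} (hr : r ≤ n) :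
    ∑ l : Fin n, (if l.val < r then (1 : R) else 0) = r := by
  simp [Finset.sum_boole, Fin.card_filter_val_lt, hr]

theorem wallIPB_rootWall_left {n p q : ℕ} (hp : p ≤ n) (hq : q ≤ n)
    (w : (Fin (n + 1) → ℝ) × ℝ) :
    wallIPB n (rootWall n p q) w = w.1 ⟨p, by omega⟩ - w.1 ⟨q, by omega⟩ := by
  have hp' := Fin.sum_ite_val_eq_mul (R := ℝ) (n := n + 1) (p := p) (by omega)
  have hq' := Fin.sum_ite_val_eq_mul (R := ℝ) (n := n + 1) (p := q) (by omega)
  have hsum : ∑ l : Fin (n + 1), (rootWall n p q).1 l = 0 := by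
    simpa [rootWall, sub_eq_zero] using (hp' 1).trans (hq' 1).symm
  rw [wallIPB, hsum]
  simp only [rootWall, sub_mul, Finset.sum_sub_distrib, hp', hq']
  ring

theorem wallIPB_rootWall_rootWall {n p q p' q' : ℕ} (hq : q + 1 = p) (hp : p ≤ n)
    (hq' : q' + 1 = p') :
    wallIPB n (rootWall n p q) (rootWall n p' q') =
      if p = p' then 2 else if p = p' + 1 ∨ p' = p + 1 then -1 else 0 := by
  rw [wallIPB_rootWall_left (by omega) (by omega)]
  simp only [rootWall]
  split_ifs <;> first | omega | norm_num

theorem wallIPB_rootWall_prefixWall {n p q r : ℕ} (hq : q + 1 = p) (hp : p ≤ n) (c : ℝ) :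
    wallIPB n (rootWall n p q) (prefixWall n r c) = if p = r then -1 else 0 := by
  rw [wallIPB_rootWall_left (by omega) (by omega)]
  simp only [prefixWall]
  split_ifs <;> first | omega | norm_num

theorem wallIPB_prefixWall {n r s : ℕ} (hr : r ≤ n + 1) (hs : s ≤ n + 1) (c c' : ℝ) :
    wallIPB n (prefixWall n r c) (prefixWall n s c') = min r s - r * s / n + c * c' := by
  simp only [wallIPB, prefixWall, ite_zero_mul_ite_zero, one_mul, ← lt_min_iff]
  rw [Fin.sum_ite_val_lt hr, Fin.sum_ite_val_lt hs, Fin.sum_ite_val_lt (min_le_of_left_le hr)]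
  push_cast
  ring

section DilatonWalls

variable {n : ℕ} {s : ℝ}

theorem wallIPB_prefixWall_sub_two (hn : 3 ≤ n) (hs : s * s = 1 / n) :
    wallIPB n (prefixWall n (n - 2) (-2 * s)) (prefixWall n (n - 2) (-2 * s)) = 2 := by
  have hn0 : (n : ℝ) ≠ 0 := by positivity
  rw [wallIPB_prefixWall (by omega) (by omega), min_self, Nat.cast_sub (by omega)]
  field_simp at hs ⊢
  linear_combination 4 * hs

theorem wallIPB_prefixWall_sub_two_one (hn : 3 ≤ n) (hs : s * s = 1 / n) :
    wallIPB n (prefixWall n (n - 2) (-2 * s)) (prefixWall n 1 s) = 0 := by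
  have hn0 : (n : ℝ) ≠ 0 := by positivity
  rw [wallIPB_prefixWall (by omega) (by omega), min_eq_right (by omega), Nat.cast_sub (by omega)]
  field_simp at hs ⊢
  linear_combination -2 * hs

theorem wallIPB_prefixWall_one (hn : 1 ≤ n) (hs : s * s = 1 / n) :
    wallIPB n (prefixWall n 1 s) (prefixWall n 1 s) = 1 := by
  have hn0 : (n : ℝ) ≠ 0 := by positivity
  rw [wallIPB_prefixWall (by omega) (by omega), min_self]
  field_simp at hs ⊢
  linear_combination hs

end DilatonWalls

/-- The walls of the theorem: `w_i` is `bnWall n a (i + 1)` for `i = −1, 0, …, n`. -/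
noncomputable def bnWall (n : ℕ) (a : ℝ) (m : Fin (n + 2)) : (Fin (n + 1) → ℝ) × ℝ :=
  if m.val = 0 then
    (fun l => (if l.val = n then (1 : ℝ) else 0) - (if l.val = n - 1 then 1 else 0), 0)
  else if m.val = 1 then
    (fun l => (if l.val = n - 1 then (1 : ℝ) else 0) - (if l.val = n - 2 then 1 else 0), 0)
  else if m.val = 2 then
    (fun l => if l.val + 3 ≤ n then (1 : ℝ) else 0, -(a * Real.sqrt 2 / 2))
  else if m.val ≤ n then
    (fun l => (if l.val = n + 1 - m.val then (1 : ℝ) else 0)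
      - (if l.val = n - m.val then 1 else 0), 0)
  else
    (fun l => if l.val = 0 then (1 : ℝ) else 0, a * Real.sqrt 2 / 4)

theorem bnWall_cases {n : ℕ} (hn : 2 ≤ n) (a : ℝ) (m : Fin (n + 2)) :
    (m.val = 2 ∧ bnWall n a m = prefixWall n (n - 2) (-2 * (a * Real.sqrt 2 / 4))) ∨
    (m.val = n + 1 ∧ bnWall n a m = prefixWall n 1 (a * Real.sqrt 2 / 4)) ∨
    ∃ p q, q + 1 = p ∧ p ≤ n ∧
      (m.val = 0 ∧ p = n ∨ m.val = 1 ∧ p = n - 1 ∨ 3 ≤ m.val ∧ p + m.val = n + 1) ∧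
      bnWall n a m = rootWall n p q := by
  have hm := m.isLt
  unfold bnWall
  split_ifs with h0 h1 h2 h3
  · exact .inr <| .inr ⟨n, n - 1, by omega, le_rfl, by omega, rfl⟩
  · exact .inr <| .inr ⟨n - 1, n - 2, by omega, by omega, by omega, rfl⟩
  · refine .inl ⟨h2, ?_⟩
    simp only [prefixWall, show ∀ k, k + 3 ≤ n ↔ k < n - 2 from fun k => by omega]
    ring_nf
  · exact .inr <| .inr ⟨n + 1 - m.val, n - m.val, by omega, by omega, by omega, rfl⟩
  · refine .inr <| .inl ⟨by omega, ?_⟩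
    simp only [prefixWall, Nat.lt_one_iff]

/-- The edges of the Dynkin diagram of `Bₙ^∧∧` in the labels of `bnWall`, the double edge
`n → n + 1` included. -/
abbrev BnDynkinAdj (n x y : ℕ) : Prop :=
  x = 0 ∧ y = 1 ∨ x = 1 ∧ y = 3 ∨ 2 ≤ x ∧ x + 1 = y ∧ y ≤ n ∨ x = n ∧ y = n + 1

noncomputable def bnGram (n x y : ℕ) : ℝ :=
  if x = y then (if x = n + 1 then 1 else 2)
  else if BnDynkinAdj n x y ∨ BnDynkinAdj n y x then -1 else 0

theorem bnGram_self (n x : ℕ) : bnGram n x x = if x = n + 1 then 1 else 2 := by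
  simp [bnGram]

theorem bnGram_cartan {n : ℕ} (hn : 4 ≤ n) (x y : ℕ) :
    2 * bnGram n x y / bnGram n x x =
      if x = y then 2
      else if (x = 0 ∧ y = 1) ∨ (y = 0 ∧ x = 1) then -1
      else if (x = 1 ∧ y = 3) ∨ (y = 1 ∧ x = 3) then -1
      else if (x + 1 = y ∨ y + 1 = x) ∧ 2 ≤ x ∧ 2 ≤ y ∧ x ≤ n ∧ y ≤ n then -1
      else if x = n ∧ y = n + 1 then -1
      else if x = n + 1 ∧ y = n then -2
      else 0 := by
  unfold bnGram
  grind (splits := 40)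

theorem wallIPB_bnWall {n : ℕ} (hn : 4 ≤ n) {a : ℝ} (ha : a = Real.sqrt (8 / n))
    (i j : Fin (n + 2)) : wallIPB n (bnWall n a i) (bnWall n a j) = bnGram n i j := by
  have hs : (a * Real.sqrt 2 / 4) * (a * Real.sqrt 2 / 4) = 1 / n := by
    have ha2 : a * a = 8 / n := by rw [ha]; exact Real.mul_self_sqrt (by positivity)
    have h2 : Real.sqrt 2 * Real.sqrt 2 = 2 := Real.mul_self_sqrt (by norm_num)
    linear_combination (Real.sqrt 2 * Real.sqrt 2 / 16) * ha2 + (1 / (2 * n)) * h2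
  rcases bnWall_cases (by omega) a i with ⟨hi, hwi⟩ | ⟨hi, hwi⟩ | ⟨p, q, hpq, hp, hi, hwi⟩ <;>
  rcases bnWall_cases (by omega) a j with ⟨hj, hwj⟩ | ⟨hj, hwj⟩ | ⟨p', q', hpq', hp', hj, hwj⟩ <;>
  rw [hwi, hwj]
  · rw [wallIPB_prefixWall_sub_two (by omega) hs, bnGram]; grind
  · rw [wallIPB_prefixWall_sub_two_one (by omega) hs, bnGram]; grind
  · rw [wallIPB_comm, wallIPB_rootWall_prefixWall hpq' hp', bnGram]; grind (splits := 40)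
  · rw [wallIPB_comm, wallIPB_prefixWall_sub_two_one (by omega) hs, bnGram]; grind
  · rw [wallIPB_prefixWall_one (by omega) hs, bnGram]; grind
  · rw [wallIPB_comm, wallIPB_rootWall_prefixWall hpq' hp', bnGram]; grind (splits := 40)
  · rw [wallIPB_rootWall_prefixWall hpq hp, bnGram]; grind (splits := 40)
  · rw [wallIPB_rootWall_prefixWall hpq hp, bnGram]; grind (splits := 40)
  · rw [wallIPB_rootWall_rootWall hpq hp hpq', bnGram]; grind (splits := 40)

theorem Bn_billiard (n : ℕ) (hn : 4 ≤ n) (a : ℝ) (ha : a = Real.sqrt (8 / (n : ℝ)))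
    (w : Fin (n + 2) → (Fin (n + 1) → ℝ) × ℝ)
    (hw : ∀ m : Fin (n + 2), w m =
      if m.val = 0 then
        (fun l => (if l.val = n then (1 : ℝ) else 0) - (if l.val = n - 1 then 1 else 0),
          0)
      else if m.val = 1 then
        (fun l => (if l.val = n - 1 then (1 : ℝ) else 0)
          - (if l.val = n - 2 then 1 else 0), 0)
      else if m.val = 2 then
        (fun l => if l.val + 3 ≤ n then (1 : ℝ) else 0, -(a * Real.sqrt 2 / 2))
      else if m.val ≤ n then
        (fun l => (if l.val = n + 1 - m.val then (1 : ℝ) else 0)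
          - (if l.val = n - m.val then 1 else 0), 0)
      else
        (fun l => if l.val = 0 then (1 : ℝ) else 0, a * Real.sqrt 2 / 4))
    (A : Fin (n + 2) → Fin (n + 2) → ℝ)
    (hA : ∀ i j, A i j = 2 * wallIPB n (w i) (w j) / wallIPB n (w i) (w i)) :
    (∀ m : Fin (n + 2), wallIPB n (w m) (w m) = if m.val = n + 1 then 1 else 2) ∧
    (∀ i j : Fin (n + 2), A i j =
      if i = j then 2
      else if (i.val = 0 ∧ j.val = 1) ∨ (j.val = 0 ∧ i.val = 1) then -1
      else if (i.val = 1 ∧ j.val = 3) ∨ (j.val = 1 ∧ i.val = 3) then -1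
      else if (i.val + 1 = j.val ∨ j.val + 1 = i.val)
          ∧ 2 ≤ i.val ∧ 2 ≤ j.val ∧ i.val ≤ n ∧ j.val ≤ n then -1
      else if i.val = n ∧ j.val = n + 1 then -1
      else if i.val = n + 1 ∧ j.val = n then -2
      else 0) := by
  have hw' : w = bnWall n a := funext hw
  subst hw'
  have hG := wallIPB_bnWall hn ha
  refine ⟨fun m => by rw [hG, bnGram_self], fun i j => ?_⟩
  rw [hA, hG, hG, bnGram_cartan hn]
  simp only [Fin.ext_iff]
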